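/- Let (R,m) be a Noetherian local ring of characteristic p > 0, and I an m-primary ideal of R. Then for every n, length(R/I^{[p^n]}) ≤ length(R/I) · length(R/m^{[p^n]}). -/

import Mathlib

/-!
Induction on `length(R/J)`. If `J ≠ R` has finite colength, the Artinian module `R/J` contains a
nonzero element killed by `m`: some `x ∉ J` with `m x ⊆ J`. Passing to `J + (x)` lowers
`length(R/J)` by at least one. Since Frobenius is additive, `(J + (x))^{[q]} = J^{[q]} + (x^q)`,
and `m^{[q]} x^q ⊆ J^{[q]}`, so `(J^{[q]} + (x^q)) / J^{[q]}` is a quotient of `R/m^{[q]}`; hence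
`length(R/J^{[q]})` drops by at most `length(R/m^{[q]})`. When `length(R/I) = ∞` the right-hand
side is `∞ · length(R/m^{[q]}) = ∞`, because `m^{[q]} ⊆ m`.
-/

open IsLocalRing

/-- `bracketPow R I q` is the ideal `I^{[q]}` generated by the `q`-th powers of elements of `I`. -/
def bracketPow (R : Type) [CommRing R] (I : Ideal R) (q : ℕ) : Ideal R :=
  Ideal.span ((fun r => r ^ q) '' (I : Set R))
/-- The length of an `R`-module `M`: the supremum of lengths of strictly
increasing chains of submodules of `M`. -/
noncomputable def moduleLength (R M : Type) [CommRing R] [AddCommGroup M] [Module R M] : ℕ∞ :=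
  ⨆ s : RelSeries {(x, y) : Submodule R M × Submodule R M | x < y}, (s.length : ℕ∞)

lemma moduleLength_eq_length (R M : Type) [CommRing R] [AddCommGroup M] [Module R M] :
    moduleLength R M = Module.length R M := by
  apply WithBot.coe_injective
  rw [Module.coe_length, Order.krullDim_eq_iSup_length]
  rfl

section Length

variable {R M : Type} [CommRing R] [AddCommGroup M] [Module R M]

lemma Submodule.length_quotient_eq_add {A B : Submodule R M} (h : A ≤ B) :
    Module.length R (M ⧸ A) = Module.length R (B.map A.mkQ) + Module.length R (M ⧸ B) := by
  rw [← (quotientQuotientEquivQuotient A B h).length_eq]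
  exact Module.length_eq_add_of_exact _ _ (Submodule.subtype_injective _)
    (Submodule.mkQ_surjective _) (LinearMap.exact_subtype_mkQ _)

lemma Submodule.map_mkQ_sup_span_singleton (A : Submodule R M) (z : M) :
    (A ⊔ R ∙ z).map A.mkQ = R ∙ A.mkQ z := by
  rw [Submodule.map_sup, Submodule.map_span, Set.image_singleton,
    Submodule.mkQ_map_self, bot_sup_eq]

lemma Submodule.length_quotient_eq_length_quotient_sup_add (A : Submodule R M) (z : M) :
    Module.length R (M ⧸ A) =
      Module.length R (M ⧸ A ⊔ R ∙ z) + Module.length R (R ∙ A.mkQ z) := by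
  rw [A.length_quotient_eq_add le_sup_left, map_mkQ_sup_span_singleton, add_comm]

lemma Submodule.length_span_singleton_le {C : Ideal R} {y : M} (h : ∀ c ∈ C, c • y = 0) :
    Module.length R (R ∙ y) ≤ Module.length R (R ⧸ C) := by
  let f : R →ₗ[R] R ∙ y := (LinearMap.toSpanSingleton R M y).codRestrict _
    fun r => Submodule.smul_mem _ r (Submodule.mem_span_singleton_self y)
  refine Module.length_le_of_surjective (C.liftQ f fun c hc => Subtype.ext (h c hc)) ?_
  rintro ⟨z, hz⟩
  obtain ⟨r, rfl⟩ := Submodule.mem_span_singleton.mp hz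
  exact ⟨Submodule.Quotient.mk r, rfl⟩

lemma exists_ne_zero_forall_maximalIdeal_smul_eq_zero [IsLocalRing R] [IsArtinian R M]
    [Nontrivial M] : ∃ x : M, x ≠ 0 ∧ ∀ c ∈ maximalIdeal R, c • x = 0 := by
  obtain ⟨a, ha⟩ := IsAtomic.exists_atom (Submodule R M)
  have : IsSimpleModule R a := isSimpleModule_iff_isAtom.mpr ha
  have hann : Module.annihilator R a = maximalIdeal R :=
    IsLocalRing.eq_maximalIdeal IsSimpleModule.annihilator_isMaximal
  obtain ⟨x, hxa, hx⟩ := (Submodule.ne_bot_iff a).mp ha.1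
  refine ⟨x, hx, fun c hc => ?_⟩
  rw [← hann] at hc
  exact congrArg Subtype.val (Module.mem_annihilator.mp hc ⟨x, hxa⟩)

end Length

section Ideal

variable {R : Type} [CommRing R]

lemma Ideal.length_quotient_le_add_of_mul_mem {A C : Ideal R} {z : R}
    (h : ∀ c ∈ C, c * z ∈ A) :
    Module.length R (R ⧸ A) ≤
      Module.length R (R ⧸ A ⊔ Ideal.span {z}) + Module.length R (R ⧸ C) := by
  rw [A.length_quotient_eq_length_quotient_sup_add z]
  gcongr
  exact Submodule.length_span_singleton_le fun c hc =>
    (Submodule.Quotient.mk_eq_zero A).mpr (h c hc)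

lemma Ideal.length_quotient_sup_span_singleton_add_one_le {J : Ideal R} {x : R} (hx : x ∉ J) :
    Module.length R (R ⧸ J ⊔ Ideal.span {x}) + 1 ≤ Module.length R (R ⧸ J) := by
  rw [J.length_quotient_eq_length_quotient_sup_add x]
  have : Nontrivial (R ∙ J.mkQ x) := by
    rw [Submodule.nontrivial_iff_ne_bot, Ne, Submodule.span_singleton_eq_bot,
      Submodule.mkQ_apply, Submodule.Quotient.mk_eq_zero]
    exact hx
  gcongr
  exact Order.one_le_iff_pos.mpr Module.length_pos

lemma Ideal.exists_notMem_forall_mul_mem [IsLocalRing R] {J : Ideal R} (hJ : J ≠ ⊤)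
    (hfin : Module.length R (R ⧸ J) ≠ ⊤) :
    ∃ x ∉ J, ∀ c ∈ maximalIdeal R, c * x ∈ J := by
  have : Nontrivial (R ⧸ J) := Submodule.Quotient.nontrivial_iff.mpr hJ
  have : IsArtinian R (R ⧸ J) :=
    (isFiniteLength_iff_isNoetherian_isArtinian.mp (Module.length_ne_top_iff.mp hfin)).2
  obtain ⟨x, hx, hxm⟩ := exists_ne_zero_forall_maximalIdeal_smul_eq_zero (R := R) (M := R ⧸ J)
  obtain ⟨x, rfl⟩ := Submodule.Quotient.mk_surjective J x
  exact ⟨x, fun h => hx ((Submodule.Quotient.mk_eq_zero J).mpr h),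
    fun c hc => (Submodule.Quotient.mk_eq_zero J).mp (hxm c hc)⟩

end Ideal

section bracketPow

variable {R : Type} [CommRing R]

lemma pow_mem_bracketPow {I : Ideal R} {x : R} (hx : x ∈ I) (q : ℕ) :
    x ^ q ∈ bracketPow R I q :=
  Ideal.subset_span ⟨x, hx, rfl⟩

lemma bracketPow_top (q : ℕ) : bracketPow R ⊤ q = ⊤ :=
  (Ideal.eq_top_iff_one _).mpr <| by
    simpa using pow_mem_bracketPow (Submodule.mem_top (x := (1 : R))) q

lemma length_quotient_bracketPow_top (q : ℕ) : Module.length R (R ⧸ bracketPow R ⊤ q) = 0 :=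
  have : Subsingleton (R ⧸ bracketPow R ⊤ q) :=
    Submodule.Quotient.subsingleton_iff.mpr (bracketPow_top q)
  Module.length_eq_zero

lemma bracketPow_le_self (I : Ideal R) {q : ℕ} (hq : q ≠ 0) : bracketPow R I q ≤ I :=
  Ideal.span_le.mpr <| by
    rintro _ ⟨x, hx, rfl⟩
    exact I.pow_mem_of_mem hx q (Nat.pos_of_ne_zero hq)

lemma bracketPow_span (p : ℕ) [ExpChar R p] (S : Set R) (n : ℕ) :
    bracketPow R (Ideal.span S) (p ^ n) = Ideal.span ((· ^ p ^ n) '' S) := by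
  refine le_antisymm (Ideal.span_le.mpr ?_) (Ideal.span_mono (Set.image_mono Ideal.subset_span))
  rintro _ ⟨y, hy, rfl⟩
  rw [SetLike.mem_coe]
  induction hy using Submodule.span_induction with
  | mem x hx => exact Ideal.subset_span ⟨x, hx, rfl⟩
  | zero => simp [zero_pow (expChar_pow_pos R p n).ne']
  | add x y _ _ hx hy => simpa only [add_pow_expChar_pow] using Ideal.add_mem _ hx hy
  | smul a x _ hx => simpa only [smul_eq_mul, mul_pow] using Ideal.mul_mem_left _ _ hx

lemma bracketPow_sup_span_singleton (p : ℕ) [ExpChar R p] (J : Ideal R) (x : R) (n : ℕ) :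
    bracketPow R (J ⊔ Ideal.span {x}) (p ^ n) =
      bracketPow R J (p ^ n) ⊔ Ideal.span {x ^ p ^ n} := by
  rw [← J.span_eq, ← Ideal.span_union, bracketPow_span, Set.image_union, Set.image_singleton,
    Ideal.span_union, J.span_eq]
  rfl

lemma mul_pow_mem_bracketPow {K J : Ideal R} {x : R} (h : ∀ c ∈ K, c * x ∈ J) (q : ℕ) :
    ∀ c ∈ bracketPow R K q, c * x ^ q ∈ bracketPow R J q := by
  intro c hc
  induction hc using Submodule.span_induction with
  | mem _ hk =>
    obtain ⟨k, hk, rfl⟩ := hk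
    simpa only [mul_pow] using pow_mem_bracketPow (h k hk) q
  | zero => simp
  | add a b _ _ ha hb => simpa only [add_mul] using Ideal.add_mem _ ha hb
  | smul a b _ hb => simpa only [smul_eq_mul, mul_assoc] using Ideal.mul_mem_left _ a hb

end bracketPow

theorem length_quotient_bracketPow_le_mul {R : Type} [CommRing R] [IsLocalRing R] (p : ℕ)
    [ExpChar R p] (n ℓ : ℕ) {J : Ideal R} (hJ : Module.length R (R ⧸ J) ≤ ℓ) :
    Module.length R (R ⧸ bracketPow R J (p ^ n)) ≤
      ℓ * Module.length R (R ⧸ bracketPow R (maximalIdeal R) (p ^ n)) := by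
  set L := Module.length R (R ⧸ bracketPow R (maximalIdeal R) (p ^ n))
  induction ℓ generalizing J with
  | zero =>
    have hJtop : J = ⊤ := Submodule.Quotient.subsingleton_iff.mp <|
      Module.length_eq_zero_iff.mp (nonpos_iff_eq_zero.mp (by exact_mod_cast hJ))
    rw [hJtop, length_quotient_bracketPow_top]
    exact zero_le
  | succ ℓ ih =>
    rcases eq_or_ne J ⊤ with rfl | hJtop
    · simp [length_quotient_bracketPow_top]
    obtain ⟨x, hxJ, hxm⟩ :=
      J.exists_notMem_forall_mul_mem hJtop (ne_top_of_le_ne_top (ENat.natCast_ne_top _) hJ)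
    have hJx : Module.length R (R ⧸ J ⊔ Ideal.span {x}) ≤ ℓ := by
      have := (J.length_quotient_sup_span_singleton_add_one_le hxJ).trans hJ
      push_cast at this
      exact (ENat.add_le_add_iff_right ENat.one_ne_top).mp this
    calc Module.length R (R ⧸ bracketPow R J (p ^ n))
        ≤ Module.length R (R ⧸ bracketPow R J (p ^ n) ⊔ Ideal.span {x ^ p ^ n}) + L :=
          Ideal.length_quotient_le_add_of_mul_mem (mul_pow_mem_bracketPow hxm _)
      _ = Module.length R (R ⧸ bracketPow R (J ⊔ Ideal.span {x}) (p ^ n)) + L := by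
          rw [bracketPow_sup_span_singleton]
      _ ≤ ℓ * L + L := by gcongr; exact ih hJx
      _ = (ℓ + 1 : ℕ) * L := by push_cast; ring

theorem stmt4_general (R : Type) [CommRing R] [IsLocalRing R]
    (p : ℕ) (hp : p.Prime) [CharP R p]
    (I : Ideal R) (n : ℕ) :
    moduleLength R (R ⧸ bracketPow R I (p ^ n)) ≤
      moduleLength R (R ⧸ I) * moduleLength R (R ⧸ bracketPow R (maximalIdeal R) (p ^ n)) := by
  have : Fact p.Prime := ⟨hp⟩
  simp only [moduleLength_eq_length]
  rcases eq_or_ne (Module.length R (R ⧸ I)) ⊤ with hIlen | hIlen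
  · have : Nontrivial (R ⧸ bracketPow R (maximalIdeal R) (p ^ n)) :=
      Submodule.Quotient.nontrivial_iff.mpr <|
        ne_top_of_le_ne_top (maximalIdeal.isMaximal R).ne_top
          (bracketPow_le_self _ (pow_ne_zero n hp.ne_zero))
    rw [hIlen, ENat.top_mul Module.length_pos.ne']
    exact le_top
  · lift Module.length R (R ⧸ I) to ℕ using hIlen with ℓ hℓ
    exact length_quotient_bracketPow_le_mul p n ℓ hℓ.ge

/-- `length(R/I^{[q]}) ≤ length(R/I) · length(R/m^{[q]})` for `q = pⁿ`. -/
theorem stmt4 (R : Type) [CommRing R] [IsNoetherianRing R] [IsLocalRing R]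
    (p : ℕ) (hp : p.Prime) [CharP R p]
    (I : Ideal R) (hI : I.radical = maximalIdeal R) (n : ℕ) :
    moduleLength R (R ⧸ bracketPow R I (p ^ n)) ≤
      moduleLength R (R ⧸ I) * moduleLength R (R ⧸ bracketPow R (maximalIdeal R) (p ^ n)) :=
  stmt4_general R p hp I n
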